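/- Let G be a minimally bad graph and O a bad connected order of G with greedy colouring π = π_{G,O}. Let k ≥ 2 and S = {s_1,…,s_k} ⊆ V(G) with s_1 < … < s_k, where s_k is adjacent to each of s_1,…,s_{k−1}. Let a_1,…,a_k ∈ V(G)∖S be k distinct vertices, each of degree 2 in G, with N(a_i) ∩ S = {s_i} for each i. Suppose that for i = 1,…,k−1, N(s_i)∖{a_i,s_k} ⊆ N(s_k). If a_k < s_k then: (1) for every v ∈ N(s_k)∖{a_k} with v < s_k, π(v) ≠ π(a_k); (2) π(a_1) = … = π(a_k) = 1 or π(a_1) = … = π(a_k) = 2; in particular, {a_1,…,a_k} is a stable set of G. -/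

import Mathlib

open Classical in
noncomputable def greedyStep {V : Type*} (G : SimpleGraph V) (f : V → ℕ) (v : V) : V → ℕ :=
  fun u => if u = v then sInf {c : ℕ | 1 ≤ c ∧ ∀ w, G.Adj v w → f w ≠ c} else f u

noncomputable def greedyFrom {V : Type*} (G : SimpleGraph V) (f : V → ℕ) (l : List V) : V → ℕ :=
  l.foldl (greedyStep G) f

noncomputable def greedy {V : Type*} (G : SimpleGraph V) (l : List V) : V → ℕ :=
  greedyFrom G (fun _ => 0) l

open Classical in
noncomputable def greedyStart2 {V : Type*} (G : SimpleGraph V) : List V → V → ℕ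
  | [] => fun _ => 0
  | v :: rest => greedyFrom G (fun u => if u = v then 2 else 0) rest

noncomputable def chi {V : Type*} [Fintype V] (G : SimpleGraph V) : ℕ :=
  sInf {n : ℕ | G.Colorable n}

open Classical in
noncomputable def idx {V : Type*} (l : List V) (v : V) : ℕ := l.idxOf v

noncomputable def maxIdx {V : Type*} (l : List V) (A : Set V) : ℕ := sSup (idx l '' A)
noncomputable def minIdx {V : Type*} (l : List V) (A : Set V) : ℕ := sInf (idx l '' A)

def IsConnOrder {V : Type*} (G : SimpleGraph V) (l : List V) : Prop :=
  l.Nodup ∧ (∀ v : V, v ∈ l) ∧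
    ∀ i : Fin l.length, 0 < i.1 → ∃ j : Fin l.length, j.1 < i.1 ∧ G.Adj (l.get j) (l.get i)

def GoodOrder {V : Type*} [Fintype V] (G : SimpleGraph V) (l : List V) : Prop :=
  ∀ v : V, greedy G l v ≤ chi G

def Good {V : Type*} [Fintype V] (G : SimpleGraph V) : Prop :=
  ∀ s : Finset V, (G.induce (↑s : Set V)).Connected →
    ∀ l : List ↥(↑s : Set V), IsConnOrder (G.induce (↑s : Set V)) l →
      GoodOrder (G.induce (↑s : Set V)) l

def BadOrder {V : Type*} [Fintype V] (G : SimpleGraph V) (l : List V) : Prop :=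
  IsConnOrder G l ∧ ¬ GoodOrder G l

def MinimallyBad {V : Type*} [Fintype V] (G : SimpleGraph V) : Prop :=
  ¬ Good G ∧ ∀ s : Finset V, s ≠ Finset.univ →
    (G.induce (↑s : Set V)).Connected → Good (G.induce (↑s : Set V))

def IsInducedPath {V : Type*} (G : SimpleGraph V) (P : List V) : Prop :=
  P.Nodup ∧ ∀ i j : Fin P.length,
    G.Adj (P.get i) (P.get j) ↔ (i.1 + 1 = j.1 ∨ j.1 + 1 = i.1)

def IsFlatPath {V : Type*} (G : SimpleGraph V) (P : List V) : Prop :=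
  IsInducedPath G P ∧
    ∀ i : Fin P.length, 0 < i.1 → i.1 + 1 < P.length → (G.neighborSet (P.get i)).ncard = 2

def WellOrderedPath {V : Type*} (l P : List V) : Prop :=
  P.Pairwise (fun u v => idx l u < idx l v) ∨ P.Pairwise (fun u v => idx l v < idx l u)

def IsMaxFlatPath {V : Type*} (G : SimpleGraph V) (P : List V) : Prop :=
  IsFlatPath G P ∧ ∀ h : P ≠ [],
    (G.neighborSet (P.head h)).ncard ≠ 2 ∧ (G.neighborSet (P.getLast h)).ncard ≠ 2

def ClawFree {V : Type*} (G : SimpleGraph V) : Prop :=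
  ∀ a b c d : V, G.Adj a b → G.Adj a c → G.Adj a d → b ≠ c → b ≠ d → c ≠ d →
    G.Adj b c ∨ G.Adj b d ∨ G.Adj c d

def IsHole {V : Type*} (G : SimpleGraph V) (C : List V) : Prop :=
  4 ≤ C.length ∧ C.Nodup ∧
    ∀ i j : Fin C.length, G.Adj (C.get i) (C.get j) ↔
      ((i.1 + 1) % C.length = j.1 ∨ (j.1 + 1) % C.length = i.1)

def GemFree {V : Type*} (G : SimpleGraph V) : Prop :=
  ¬ ∃ a b c d e : V, G.Adj a b ∧ G.Adj b c ∧ G.Adj c d ∧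
    ¬ G.Adj a c ∧ ¬ G.Adj a d ∧ ¬ G.Adj b d ∧
    G.Adj e a ∧ G.Adj e b ∧ G.Adj e c ∧ G.Adj e d

/-!
Deleting a vertex `x` from the minimally bad graph `G` leaves a connected induced subgraph, which
is good. So if some connected order of `G - x` reproduces the greedy colouring of `G` away from
`x`, and `π(x) ≤ χ(G)`, then the colour exceeding `χ(G)` survives in a good graph, which is
impossible. Connected orders of bipartite graphs use two colours, so `χ(G) ≥ 3`; deleting a
degree-2 vertex whose two neighbours both precede it then shows that every degree-2 vertex has
colour at most 2.

For (1): if `v < s_k` is a neighbour of `s_k` with `π(v) = π(a_k)`, then `v` does for `s_k`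
what `a_k` did, so deleting `a_k` (and, when `a_k` comes first, putting the third vertex before
the second) keeps the colouring. For (2), let `c = π(a_k) ∈ {1, 2}`. By (1) and
`N(s_i) ∖ {a_i, s_k} ⊆ N(s_k)`, neither `s_i` nor a neighbour of `s_i` preceding it, other than
`a_i`, has colour `c`. If `π(s_i) > c`, the earlier neighbour of `s_i` with colour `c` must be
`a_i`; otherwise `c = 2`, `π(s_i) = 1` and `π(a_i) ∈ {1, 2} ∖ {π(s_i)}`. Adjacent vertices
get distinct colours, which gives (3).
-/

section Greedy

open Classical

variable {V : Type*} {G : SimpleGraph V} {l : List V}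

theorem idx_cons (a w : V) (t : List V) :
    idx (a :: t) w = if w = a then 0 else idx t w + 1 := by
  by_cases h : w = a
  · simp [idx, h]
  · simp [idx, h, List.idxOf_cons_ne _ (Ne.symm h)]

theorem idx_cons_cons (x b w : V) (t : List V) :
    idx (x :: b :: t) w = if w = x then 0 else if w = b then 1 else idx t w + 2 := by
  simp only [idx_cons]; split_ifs <;> rfl

theorem idx_cons_cons_cons (x b c w : V) (t : List V) :
    idx (x :: b :: c :: t) w =
      if w = x then 0 else if w = b then 1 else if w = c then 2 else idx t w + 3 := by
  simp only [idx_cons]; split_ifs <;> rfl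

theorem idx_lt_length_iff {v : V} : idx l v < l.length ↔ v ∈ l :=
  List.idxOf_lt_length_iff

theorem mem_of_idx_lt {v w : V} (hv : v ∈ l) (h : idx l w < idx l v) : w ∈ l :=
  idx_lt_length_iff.1 (h.trans (idx_lt_length_iff.2 hv))

theorem idx_inj {u v : V} (hu : u ∈ l) (h : idx l u = idx l v) : u = v :=
  (List.idxOf_inj hu).1 h

theorem idx_get (hnd : l.Nodup) (i : Fin l.length) : idx l (l.get i) = i :=
  List.get_idxOf hnd i

theorem get_idx {v : V} (hv : v ∈ l) : l.get ⟨idx l v, idx_lt_length_iff.2 hv⟩ = v :=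
  List.idxOf_get _

theorem idx_map_of_injective {W : Type*} {f : V → W} (hf : Function.Injective f) (v : V) :
    idx (l.map f) (f v) = idx l v := by
  induction l with
  | nil => rfl
  | cons a t ih => simp only [List.map_cons, idx_cons, hf.eq_iff, ih]

theorem idx_erase_lt_iff (hnd : l.Nodup) {x v w : V} (hv : v ∈ l) (hw : w ∈ l) (hvx : v ≠ x)
    (hwx : w ≠ x) : idx (l.erase x) w < idx (l.erase x) v ↔ idx l w < idx l v := by
  by_cases hx : x ∈ l
  · obtain ⟨m, m', rfl⟩ := List.append_of_mem hx
    have hxm : x ∉ m := fun h => List.disjoint_of_nodup_append hnd h List.mem_cons_self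
    have hlt : ∀ u ∈ m, List.idxOf u m < m.length := fun u hu => List.idxOf_lt_length_iff.2 hu
    rw [List.erase_append_right _ hxm, List.erase_cons_head]
    simp only [idx, List.idxOf_append, List.idxOf_cons_ne _ (Ne.symm hvx),
      List.idxOf_cons_ne _ (Ne.symm hwx)]
    split_ifs with h1 h2 h2 <;> grind
  · rw [List.erase_of_not_mem hx]

def freeColours (G : SimpleGraph V) (l : List V) (f : V → ℕ) (v : V) : Set ℕ :=
  {c | 1 ≤ c ∧ ∀ w, G.Adj v w → idx l w < idx l v → f w ≠ c}

theorem freeColours_congr {f g : V → ℕ} {v : V}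
    (h : ∀ w, G.Adj v w → idx l w < idx l v → f w = g w) :
    freeColours G l f v = freeColours G l g v := by
  ext c
  simp only [freeColours, Set.mem_ofPred_eq]
  exact and_congr_right fun _ => forall_congr' fun w => imp_congr_right fun hw =>
    imp_congr_right fun hlt => by rw [h w hw hlt]

theorem freeColours_nonempty {v : V} (hv : v ∈ l) (f : V → ℕ) :
    (freeColours G l f v).Nonempty := by
  refine ⟨(l.map f).sum + 1, le_add_self, fun w _ hw => ?_⟩
  have := List.le_sum_of_mem (List.mem_map_of_mem (f := f) (mem_of_idx_lt hv hw))
  omega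

theorem freeColours_eq_of_compensated {l' : List V} {f : V → ℕ} {x v : V} (hx : x ∉ l')
    (hv : v ∈ l') (hord : ∀ w, w ≠ x → (idx l' w < idx l' v ↔ idx l w < idx l v))
    (hcomp : G.Adj x v → idx l x < idx l v →
      ∃ w, w ≠ x ∧ G.Adj w v ∧ idx l w < idx l v ∧ f w = f x) :
    freeColours G l' f v = freeColours G l f v := by
  ext c
  refine and_congr_right fun _ => ⟨fun h w hadj hlt => ?_, fun h w hadj hlt => ?_⟩
  · by_cases hwx : w = x
    · subst hwx
      obtain ⟨w', hw'x, hw'adj, hw'lt, hw'col⟩ := hcomp hadj.symm hlt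
      exact hw'col ▸ h w' hw'adj.symm ((hord w' hw'x).2 hw'lt)
    · exact h w hadj ((hord w hwx).2 hlt)
  · have hwx : w ≠ x := by rintro rfl; exact hx (mem_of_idx_lt hv hlt)
    exact h w hadj ((hord w hwx).1 hlt)

theorem greedyFrom_of_not_mem (f : V → ℕ) {v : V} (hv : v ∉ l) :
    greedyFrom G f l v = f v := by
  induction l generalizing f with
  | nil => rfl
  | cons a t ih =>
    rw [List.mem_cons, not_or] at hv
    exact (ih _ hv.2).trans (if_neg hv.1)

theorem greedy_of_not_mem {v : V} (hv : v ∉ l) : greedy G l v = 0 :=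
  greedyFrom_of_not_mem _ hv

theorem greedy_append_of_not_mem (m m' : List V) {v : V} (hv : v ∉ m') :
    greedy G (m ++ m') v = greedy G m v := by
  rw [greedy, greedyFrom, List.foldl_append]
  exact greedyFrom_of_not_mem _ hv

theorem greedy_eq_sInf_freeColours (hnd : l.Nodup) {v : V} (hv : v ∈ l) :
    greedy G l v = sInf (freeColours G l (greedy G l) v) := by
  obtain ⟨m, m', rfl⟩ := List.append_of_mem hv
  have hvm : v ∉ m := fun h => List.disjoint_of_nodup_append hnd h List.mem_cons_self
  have hvm' : v ∉ m' := (List.nodup_cons.1 (List.nodup_append.1 hnd).2.1).1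
  have hsplit : m ++ v :: m' = (m ++ [v]) ++ m' := by simp
  have hprefix : ∀ w ∈ m, greedy G (m ++ v :: m') w = greedy G m w := fun w hw => by
    rw [hsplit, greedy_append_of_not_mem _ _
        fun h => List.disjoint_of_nodup_append hnd hw (List.mem_cons_of_mem _ h),
      greedy_append_of_not_mem _ _ (by simpa using fun h : w = v => hvm (h ▸ hw))]
  have hidx : ∀ w, idx (m ++ v :: m') w < idx (m ++ v :: m') v ↔ w ∈ m := fun w => by
    simp only [idx, List.idxOf_append, if_neg hvm, List.idxOf_cons_self]
    split_ifs with hw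
    · exact iff_of_true (by simpa using List.idxOf_lt_length_iff.2 hw) hw
    · simpa using hw
  have hval : greedy G (m ++ v :: m') v
      = sInf {c | 1 ≤ c ∧ ∀ w, G.Adj v w → greedy G m w ≠ c} := by
    rw [hsplit, greedy_append_of_not_mem _ _ hvm']
    simp [greedy, greedyFrom, greedyStep]
  rw [hval]
  congr 1
  ext c
  simp only [freeColours, Set.mem_ofPred_eq, hidx]
  refine and_congr_right fun hc => forall_congr' fun w => imp_congr_right fun _ => ?_
  by_cases hw : w ∈ m
  · simp only [hw, true_implies, hprefix w hw]
  · simp only [hw, false_implies, iff_true, greedy_of_not_mem hw]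
    omega

theorem greedy_eq_of_forall_eq_sInf (hnd : l.Nodup) {f : V → ℕ}
    (hf : ∀ v ∈ l, f v = sInf (freeColours G l f v)) : ∀ v ∈ l, greedy G l v = f v := by
  intro v hv
  induction h : idx l v using Nat.strong_induction_on generalizing v with
  | _ n ih =>
    rw [greedy_eq_sInf_freeColours hnd hv, hf v hv]
    exact congrArg sInf (freeColours_congr fun w _ hw =>
      ih _ (h ▸ hw) w (mem_of_idx_lt hv hw) rfl)

theorem sInf_freeColours_cons_cons {b c : V} {t : List V} {f : V → ℕ} (hbc : b ≠ c)
    (hadj : G.Adj b c) (hc : f c = 1) :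
    sInf (freeColours G (c :: b :: t) f c) = 1 ∧ sInf (freeColours G (c :: b :: t) f b) = 2 := by
  refine ⟨IsLeast.csInf_eq
    ⟨⟨le_rfl, fun w _ hlt => by simp [idx_cons_cons] at hlt⟩, fun _ h => h.1⟩,
    IsLeast.csInf_eq ⟨⟨by norm_num, fun w _ hlt => ?_⟩, fun d ⟨hd, hfree⟩ => ?_⟩⟩
  · simp only [idx_cons_cons, hbc, if_true, if_false] at hlt
    split_ifs at hlt with hwc
    · rw [hwc, hc]; norm_num
    all_goals omega
  · have := hfree c hadj (by simp [idx_cons_cons, hbc])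
    omega

theorem greedy_mem_freeColours (hnd : l.Nodup) {v : V} (hv : v ∈ l) :
    greedy G l v ∈ freeColours G l (greedy G l) v := by
  rw [greedy_eq_sInf_freeColours hnd hv]
  exact Nat.sInf_mem (freeColours_nonempty hv _)

theorem one_le_greedy (hnd : l.Nodup) {v : V} (hv : v ∈ l) : 1 ≤ greedy G l v :=
  (greedy_mem_freeColours hnd hv).1

theorem greedy_ne_of_adj (hnd : l.Nodup) {u v : V} (hu : u ∈ l) (hv : v ∈ l)
    (hadj : G.Adj u v) : greedy G l u ≠ greedy G l v := by
  rcases lt_trichotomy (idx l u) (idx l v) with h | h | h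
  · exact fun hc => (greedy_mem_freeColours hnd hv).2 u hadj.symm h hc
  · exact absurd (idx_inj hu h) hadj.ne
  · exact fun hc => (greedy_mem_freeColours hnd hu).2 v hadj h hc.symm

theorem greedy_le_of_forall_ne (hnd : l.Nodup) {v : V} (hv : v ∈ l) {c : ℕ} (hc : 1 ≤ c)
    (h : ∀ w, G.Adj v w → idx l w < idx l v → greedy G l w ≠ c) : greedy G l v ≤ c := by
  rw [greedy_eq_sInf_freeColours hnd hv]
  exact Nat.sInf_le ⟨hc, h⟩

theorem exists_earlier_neighbor_greedy_eq (hnd : l.Nodup) {v : V} (hv : v ∈ l) {c : ℕ}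
    (hc : 1 ≤ c) (hlt : c < greedy G l v) :
    ∃ w, G.Adj v w ∧ idx l w < idx l v ∧ greedy G l w = c := by
  by_contra! h
  exact hlt.not_ge (greedy_le_of_forall_ne hnd hv hc h)

theorem greedy_le_card_add_one (hnd : l.Nodup) {v : V} (hv : v ∈ l) {T : Finset V}
    (hT : ∀ w, G.Adj v w → idx l w < idx l v → w ∈ T) : greedy G l v ≤ T.card + 1 := by
  obtain ⟨c, hc, hcT⟩ := Finset.exists_mem_notMem_of_card_lt_card
    (s := T.image (greedy G l)) (t := Finset.Icc 1 (T.card + 1))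
    (by simpa using Finset.card_image_le.trans_lt (Nat.lt_succ_self _))
  rw [Finset.mem_Icc] at hc
  exact (greedy_le_of_forall_ne hnd hv hc.1 fun w hw hlt hwc =>
    hcT (Finset.mem_image.2 ⟨w, hT w hw hlt, hwc⟩)).trans hc.2

theorem greedy_of_cons_cons_cons {x b c : V} {t : List V} (hnd : (x :: b :: c :: t).Nodup)
    (hxb : G.Adj x b) (hxc : ¬ G.Adj x c) :
    greedy G (x :: b :: c :: t) x = 1 ∧ greedy G (x :: b :: c :: t) b = 2 ∧
      greedy G (x :: b :: c :: t) c = 1 := by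
  have hne : b ≠ x ∧ c ≠ x ∧ c ≠ b := by simp_all [List.nodup_cons]; grind
  have hmem : x ∈ x :: b :: c :: t ∧ b ∈ x :: b :: c :: t ∧ c ∈ x :: b :: c :: t := by
    simp
  have hx : greedy G (x :: b :: c :: t) x = 1 :=
    le_antisymm (greedy_le_of_forall_ne hnd hmem.1 le_rfl fun w _ hlt => by
      simp only [idx_cons_cons_cons, if_true] at hlt; omega) (one_le_greedy hnd hmem.1)
  have hb : greedy G (x :: b :: c :: t) b = 2 := by
    refine le_antisymm (greedy_le_of_forall_ne hnd hmem.2.1 (by norm_num) fun w _ hlt => ?_) ?_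
    · simp only [idx_cons_cons_cons, hne, if_true, if_false] at hlt
      split_ifs at hlt with hwx
      · rw [hwx, hx]; norm_num
      all_goals omega
    · have := greedy_ne_of_adj hnd hmem.1 hmem.2.1 hxb
      have := one_le_greedy hnd hmem.2.1 (G := G)
      omega
  refine ⟨hx, hb, le_antisymm (greedy_le_of_forall_ne hnd hmem.2.2 le_rfl fun w hw hlt => ?_)
    (one_le_greedy hnd hmem.2.2)⟩
  simp only [idx_cons_cons_cons, hne, if_true, if_false] at hlt
  split_ifs at hlt with hwx hwb
  · exact absurd (hwx ▸ hw.symm) hxc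
  · rw [hwb, hb]; norm_num
  all_goals omega

def HasEarlierNeighbours (G : SimpleGraph V) (l : List V) : Prop :=
  ∀ v ∈ l, idx l v ≠ 0 → ∃ w, G.Adj w v ∧ idx l w < idx l v

theorem isConnOrder_iff :
    IsConnOrder G l ↔ l.Nodup ∧ (∀ v, v ∈ l) ∧ HasEarlierNeighbours G l := by
  refine and_congr_right fun hnd => and_congr_right fun _ =>
    ⟨fun h v hv h0 => ?_, fun h i hi => ?_⟩
  · obtain ⟨j, hj, hadj⟩ := h ⟨idx l v, idx_lt_length_iff.2 hv⟩ (Nat.pos_of_ne_zero h0)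
    refine ⟨l.get j, by rwa [get_idx hv] at hadj, ?_⟩
    rwa [idx_get hnd]
  · obtain ⟨w, hadj, hlt⟩ := h (l.get i) (List.get_mem _ _) (by rw [idx_get hnd]; omega)
    have hw := mem_of_idx_lt (List.get_mem _ _) hlt
    refine ⟨⟨idx l w, idx_lt_length_iff.2 hw⟩, by rwa [idx_get hnd] at hlt, ?_⟩
    rwa [get_idx hw]

theorem HasEarlierNeighbours.reachable (h : HasEarlierNeighbours G l) {x : V} (hx : x ∈ l)
    (hx0 : idx l x = 0) {v : V} (hv : v ∈ l) : G.Reachable x v := by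
  induction hn : idx l v using Nat.strong_induction_on generalizing v with
  | _ n ih =>
    by_cases h0 : idx l v = 0
    · rw [idx_inj hx (hx0.trans h0.symm)]
    · obtain ⟨w, hadj, hlt⟩ := h v hv h0
      exact (ih _ (hn ▸ hlt) (mem_of_idx_lt hv hlt) rfl).trans hadj.reachable

theorem IsConnOrder.connected [Nonempty V] (hco : IsConnOrder G l) : G.Connected := by
  obtain ⟨hnd, hcov, h⟩ := isConnOrder_iff.1 hco
  obtain ⟨x, t, rfl⟩ :=
    List.exists_cons_of_ne_nil (List.ne_nil_of_mem (hcov (Classical.arbitrary V)))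
  have hx0 : idx (x :: t) x = 0 := by simp [idx_cons]
  refine (SimpleGraph.connected_iff _).2 ⟨fun u v => ?_, inferInstance⟩
  exact (h.reachable (hcov x) hx0 (hcov u)).symm.trans (h.reachable (hcov x) hx0 (hcov v))

theorem greedy_induce {s : Set V} {m : List s} (hnd : m.Nodup) (u : s) :
    greedy (G.induce s) m u = greedy G (m.map Subtype.val) u := by
  have hnd' : (m.map Subtype.val).Nodup := hnd.map Subtype.val_injective
  have hidx := idx_map_of_injective (l := m) Subtype.val_injective
  by_cases hu : u ∈ m
  · refine greedy_eq_of_forall_eq_sInf (f := fun u : s => greedy G (m.map Subtype.val) u) hnd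
      (fun v hv => ?_) u hu
    rw [greedy_eq_sInf_freeColours hnd' (List.mem_map_of_mem hv)]
    congr 1
    ext c
    simp only [freeColours, Set.mem_ofPred_eq, hidx]
    refine and_congr_right fun _ =>
      ⟨fun h w hadj hlt => h w hadj (by rwa [hidx]), fun h w hadj hlt => ?_⟩
    rw [← hidx] at hlt
    obtain ⟨w', -, rfl⟩ := List.mem_map.1 (mem_of_idx_lt (List.mem_map_of_mem hv) hlt)
    exact h w' hadj (by simpa only [hidx] using hlt)
  · rw [greedy_of_not_mem hu, greedy_of_not_mem]
    exact fun h => hu (by simpa using h)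

theorem isConnOrder_induce {s : Set V} {m : List s} (hnd : m.Nodup) (hcov : ∀ u, u ∈ m)
    (h : HasEarlierNeighbours G (m.map Subtype.val)) : IsConnOrder (G.induce s) m := by
  have hidx := idx_map_of_injective (l := m) Subtype.val_injective
  refine isConnOrder_iff.2 ⟨hnd, hcov, fun u hu h0 => ?_⟩
  rw [← hidx] at h0
  obtain ⟨w, hadj, hlt⟩ := h u (List.mem_map_of_mem hu) h0
  obtain ⟨w', -, rfl⟩ := List.mem_map.1 (mem_of_idx_lt (List.mem_map_of_mem hu) hlt)
  exact ⟨w', hadj, by rwa [← hidx, ← hidx]⟩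

theorem IsConnOrder.greedy_le_two_of_colorable (hco : IsConnOrder G l) (h2 : G.Colorable 2)
    (v : V) : greedy G l v ≤ 2 := by
  obtain ⟨C⟩ := h2
  obtain ⟨hnd, hcov, h⟩ := isConnOrder_iff.1 hco
  obtain ⟨x, t, rfl⟩ := List.exists_cons_of_ne_nil (List.ne_nil_of_mem (hcov v))
  have hflip : ∀ u w, G.Adj u w → (C w = C x ↔ C u ≠ C x) := fun u w hadj => by
    have := C.valid hadj
    revert this; generalize C u = a; generalize C w = b; generalize C x = c; decide +revert
  -- the greedy colouring is the 2-colouring normalised so that the first vertex gets colour 1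
  let f : V → ℕ := fun u => if C u = C x then 1 else 2
  have hf : ∀ u ∈ x :: t, f u = sInf (freeColours G (x :: t) f u) := by
    intro u hu
    by_cases hux : C u = C x
    · rw [show f u = 1 from if_pos hux]
      refine (IsLeast.csInf_eq (s := freeColours G (x :: t) f u)
        ⟨⟨le_rfl, fun w hw _ => ?_⟩, fun c hc => hc.1⟩).symm
      simp [f, (hflip u w hw).not.2 (not_not.2 hux)]
    · have hu0 : idx (x :: t) u ≠ 0 := fun h0 =>
        hux (by rw [idx_inj hu (h0.trans (by simp [idx_cons] : 0 = idx (x :: t) x))])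
      obtain ⟨w₀, hw₀, hlt₀⟩ := h u hu hu0
      rw [show f u = 2 from if_neg hux]
      refine (IsLeast.csInf_eq (s := freeColours G (x :: t) f u)
        ⟨⟨by norm_num, fun w hw _ => ?_⟩, fun c ⟨hc, hfree⟩ => ?_⟩).symm
      · simp [f, (hflip u w hw).2 hux]
      · have := hfree w₀ hw₀.symm hlt₀
        simp only [f, if_pos ((hflip u w₀ hw₀.symm).2 hux)] at this
        omega
  rw [greedy_eq_of_forall_eq_sInf hnd hf v (hcov v)]
  simp only [f]
  split <;> omega

theorem exists_adj_iff_of_ncard_neighborSet_eq_two {a s : V}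
    (hdeg : (G.neighborSet a).ncard = 2) (has : G.Adj a s) :
    ∃ b, b ≠ s ∧ ∀ w, G.Adj a w ↔ w = s ∨ w = b := by
  obtain ⟨p, q, hpq, hset⟩ := Set.ncard_eq_two.1 hdeg
  have hadj : ∀ w, G.Adj a w ↔ w = p ∨ w = q := fun w => by
    rw [← G.mem_neighborSet, hset]; simp
  rcases (hadj s).1 has with rfl | rfl
  · exact ⟨q, hpq.symm, hadj⟩
  · exact ⟨p, hpq, fun w => (hadj w).trans or_comm⟩

end Greedy

section Chi

variable {V : Type*} [Fintype V] {G : SimpleGraph V} {l : List V}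

theorem colorable_chi (G : SimpleGraph V) : G.Colorable (chi G) :=
  Nat.sInf_mem (s := {n | G.Colorable n}) ⟨_, G.colorable_of_fintype⟩

theorem chi_le_of_colorable {n : ℕ} (h : G.Colorable n) : chi G ≤ n :=
  Nat.sInf_le h

theorem chi_induce_le (s : Set V) [Fintype s] : chi (G.induce s) ≤ chi G :=
  chi_le_of_colorable ((colorable_chi G).of_hom (SimpleGraph.Embedding.induce s).toHom)

theorem two_le_chi_of_adj {u v : V} (hadj : G.Adj u v) : 2 ≤ chi G := by
  by_contra! h
  obtain ⟨C⟩ := (colorable_chi G).mono (Nat.le_of_lt_succ h)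
  exact C.valid hadj (Subsingleton.elim _ _)

theorem Good.greedy_le_chi (hg : Good G) (hco : IsConnOrder G l) (v : V) :
    greedy G l v ≤ chi G := by
  obtain ⟨hnd, hcov, h⟩ := isConnOrder_iff.1 hco
  let m : List ↥((Finset.univ : Finset V) : Set V) := l.map fun u => ⟨u, by simp⟩
  have hmap : m.map Subtype.val = l := by simp [m, Function.comp_def]
  have hmnd : m.Nodup := hnd.map fun _ _ h => congrArg Subtype.val h
  have hmco : IsConnOrder (G.induce _) m :=
    isConnOrder_induce hmnd (fun u => List.mem_map.2 ⟨u, hcov u, rfl⟩) (hmap ▸ h)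
  have : Nonempty ↥((Finset.univ : Finset V) : Set V) := ⟨⟨v, by simp⟩⟩
  calc greedy G l v = greedy (G.induce _) m ⟨v, by simp⟩ := by
        rw [greedy_induce hmnd, hmap]
    _ ≤ chi (G.induce _) := hg _ hmco.connected m hmco _
    _ ≤ chi G := chi_induce_le _

theorem BadOrder.three_le_chi (hbad : BadOrder G l) {u v : V} (hadj : G.Adj u v) :
    3 ≤ chi G := by
  by_contra! h
  have h2 : G.Colorable 2 := (colorable_chi G).mono (by omega)
  have := two_le_chi_of_adj hadj
  exact hbad.2 fun w => (hbad.1.greedy_le_two_of_colorable h2 w).trans (by omega)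

end Chi

section MinimallyBad

open Classical

variable {V : Type*} [Fintype V] {G : SimpleGraph V} {l : List V}

theorem MinimallyBad.false_of_delete (hmin : MinimallyBad G) (hbad : BadOrder G l) {x : V}
    {l' : List V} (hnd : l'.Nodup) (hmem : ∀ v, v ∈ l' ↔ v ≠ x)
    (hconn : HasEarlierNeighbours G l')
    (hfree : ∀ v ∈ l', greedy G l v = sInf (freeColours G l' (greedy G l) v))
    (hx : greedy G l x ≤ chi G) : False := by
  have hgr := greedy_eq_of_forall_eq_sInf hnd hfree
  obtain ⟨w, hw⟩ : ∃ w, chi G < greedy G l w := by simpa [GoodOrder] using hbad.2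
  have hwx : w ≠ x := by rintro rfl; omega
  let t := Finset.univ.erase x
  have ht : ∀ v, v ∈ (t : Set V) ↔ v ≠ x := by simp [t]
  let m : List (t : Set V) := l'.pmap Subtype.mk fun v hv => (ht v).2 ((hmem v).1 hv)
  have hmap : m.map Subtype.val = l' := by simp [m, List.map_pmap]
  have hmnd : m.Nodup := hnd.pmap fun _ _ _ _ h => congrArg Subtype.val h
  have hmco : IsConnOrder (G.induce t) m := isConnOrder_induce hmnd
    (fun u => List.mem_pmap.2 ⟨u.1, (hmem _).2 ((ht _).1 u.2), rfl⟩) (hmap ▸ hconn)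
  have : Nonempty (t : Set V) := ⟨⟨w, (ht w).2 hwx⟩⟩
  -- `w` keeps its colour, above `chi G ≥ chi (G - x)`, in the good graph `G - x`
  have hgood : Good (G.induce t) :=
    hmin.2 t (fun h => (ht x).1 (by simp [h]) rfl) hmco.connected
  have hle : greedy G l w ≤ chi G :=
    calc greedy G l w = greedy (G.induce t) m ⟨w, (ht w).2 hwx⟩ := by
          rw [greedy_induce hmnd, hmap, hgr w ((hmem w).2 hwx)]
      _ ≤ chi (G.induce t) := hgood.greedy_le_chi hmco _
      _ ≤ chi G := chi_induce_le _
  omega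

theorem MinimallyBad.false_of_erase (hmin : MinimallyBad G) (hbad : BadOrder G l) {x : V}
    (hx0 : idx l x ≠ 0)
    (hcomp : ∀ v, G.Adj x v → idx l x < idx l v →
      ∃ w, w ≠ x ∧ G.Adj w v ∧ idx l w < idx l v ∧ greedy G l w = greedy G l x)
    (hx : greedy G l x ≤ chi G) : False := by
  obtain ⟨hnd, hcov, hconn⟩ := isConnOrder_iff.1 hbad.1
  have hmem : ∀ v, v ∈ l.erase x ↔ v ≠ x := by simp [hnd.mem_erase_iff, hcov]
  have hord : ∀ v ∈ l.erase x, ∀ w, w ≠ x →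
      (idx (l.erase x) w < idx (l.erase x) v ↔ idx l w < idx l v) := fun v hv w hwx =>
    idx_erase_lt_iff hnd (hcov v) (hcov w) ((hmem v).1 hv) hwx
  refine hmin.false_of_delete hbad (hnd.erase x) hmem (fun v hv h0 => ?_) (fun v hv => ?_) hx
  · have hv0 : idx l v ≠ 0 := by
      obtain ⟨y, r, hy⟩ := List.exists_cons_of_ne_nil (List.ne_nil_of_mem hv)
      have hyx : y ≠ x := (hmem y).1 (hy ▸ List.mem_cons_self)
      have hy0 : idx (l.erase x) y = 0 := by rw [hy, idx_cons, if_pos rfl]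
      have := (hord v hv y hyx).1 (by omega)
      omega
    obtain ⟨w, hadj, hlt⟩ := hconn v (hcov v) hv0
    by_cases hwx : w = x
    · subst hwx
      obtain ⟨w', hw'x, hw'adj, hw'lt, -⟩ := hcomp v hadj hlt
      exact ⟨w', hw'adj, (hord v hv w' hw'x).2 hw'lt⟩
    · exact ⟨w, hadj, (hord v hv w hwx).2 hlt⟩
  · rw [freeColours_eq_of_compensated (by simp [hmem]) hv (hord v hv) (hcomp v),
      ← greedy_eq_sInf_freeColours hnd (hcov v)]

theorem MinimallyBad.false_of_delete_head (hmin : MinimallyBad G) {x b c : V} {t : List V}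
    (hbad : BadOrder G (x :: b :: c :: t)) (hxb : G.Adj x b) (hxc : ¬ G.Adj x c)
    (hbc : G.Adj b c)
    (hcomp : ∀ v, G.Adj x v → v ≠ b → ∃ w, w ≠ x ∧ G.Adj w v ∧
      idx (x :: b :: c :: t) w < idx (x :: b :: c :: t) v ∧
      greedy G (x :: b :: c :: t) w = greedy G (x :: b :: c :: t) x) : False := by
  obtain ⟨hnd, hcov, hconn⟩ := isConnOrder_iff.1 hbad.1
  obtain ⟨hx1, hb2, hc1⟩ := greedy_of_cons_cons_cons hnd hxb hxc
  have hnd' := hnd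
  simp only [List.nodup_cons, List.mem_cons, not_or] at hnd'
  obtain ⟨⟨hxb', hxc', hxt⟩, ⟨hbc', hbt⟩, hct, htnd⟩ := hnd'
  have hmem : ∀ v, v ∈ c :: b :: t ↔ v ≠ x := fun v => by
    have := hcov v
    simp only [List.mem_cons] at this ⊢
    constructor
    · rintro (rfl | rfl | hv) <;> grind
    · grind
  have hord : ∀ v ∈ t, ∀ w, w ≠ x →
      (idx (c :: b :: t) w < idx (c :: b :: t) v ↔
        idx (x :: b :: c :: t) w < idx (x :: b :: c :: t) v) := fun v hv w hwx => by
    have : v ≠ x ∧ v ≠ b ∧ v ≠ c := by grind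
    rw [idx_cons_cons, idx_cons_cons, idx_cons_cons_cons, idx_cons_cons_cons]
    simp only [this, hwx, if_false]
    split_ifs <;> omega
  -- in the order `c :: b :: t` of `G - x`, `c` and `b` keep their colours 1 and 2, and every
  -- later vertex keeps its palette
  refine hmin.false_of_delete hbad (by simp [hct, hbt, htnd, Ne.symm hbc']) hmem
    (fun v hv h0 => ?_) (fun v hv => ?_)
    (hx1 ▸ (two_le_chi_of_adj hxb).trans' (by norm_num))
  · rcases List.mem_cons.1 hv with rfl | hv
    · simp [idx_cons_cons] at h0
    rcases List.mem_cons.1 hv with rfl | hv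
    · exact ⟨c, hbc.symm, by simp [idx_cons_cons, hbc']⟩
    have hv' : v ≠ x ∧ v ≠ b ∧ v ≠ c := by grind
    obtain ⟨w, hadj, hlt⟩ := hconn v (hcov v) (by simp [idx_cons_cons_cons, hv'])
    by_cases hwx : w = x
    · subst hwx
      obtain ⟨w', hw'x, hw'adj, hw'lt, -⟩ := hcomp v hadj (by grind)
      exact ⟨w', hw'adj, (hord v hv w' hw'x).2 hw'lt⟩
    · exact ⟨w, hadj, (hord v hv w hwx).2 hlt⟩
  · obtain ⟨hfc, hfb⟩ := sInf_freeColours_cons_cons (t := t) (f := greedy G _) hbc' hbc hc1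
    rcases List.mem_cons.1 hv with rfl | hv
    · rw [hc1, hfc]
    rcases List.mem_cons.1 hv with rfl | hv
    · rw [hb2, hfb]
    · rw [freeColours_eq_of_compensated (by simp [hmem]) (by simp [hv]) (hord v hv)
        fun hadj _ => hcomp v hadj (by grind), ← greedy_eq_sInf_freeColours hnd (hcov v)]

theorem MinimallyBad.greedy_le_two_of_ncard_neighborSet_eq_two (hmin : MinimallyBad G)
    (hbad : BadOrder G l) {a : V} (hdeg : (G.neighborSet a).ncard = 2) : greedy G l a ≤ 2 := by
  obtain ⟨hnd, hcov, hconn⟩ := isConnOrder_iff.1 hbad.1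
  obtain ⟨p, hap⟩ := Set.nonempty_of_ncard_ne_zero (by omega : (G.neighborSet a).ncard ≠ 0)
  obtain ⟨q, -, hadj⟩ := exists_adj_iff_of_ncard_neighborSet_eq_two hdeg hap
  -- if one neighbour of `a` comes after it, only the other one can block a colour
  have hlater : ∀ w w', (∀ u, G.Adj a u ↔ u = w ∨ u = w') → idx l a < idx l w →
      greedy G l a ≤ 2 := fun w w' hww' hw =>
    greedy_le_card_add_one (T := {w'}) hnd (hcov a) fun u hu hlt => by
      rcases (hww' u).1 hu with rfl | rfl
      · omega
      · simp
  by_cases hp : idx l a < idx l p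
  · exact hlater p q hadj hp
  by_cases hq : idx l a < idx l q
  · exact hlater q p (fun u => (hadj u).trans or_comm) hq
  have hpa : idx l p < idx l a := lt_of_le_of_ne (not_lt.1 hp)
    fun h => hap.ne (idx_inj (hcov p) h).symm
  exfalso
  refine hmin.false_of_erase hbad (x := a) (by omega) (fun v hv hlt => ?_) ?_
  · rcases (hadj v).1 hv with rfl | rfl <;> omega
  · calc greedy G l a ≤ ({p, q} : Finset V).card + 1 :=
          greedy_le_card_add_one hnd (hcov a) fun u hu _ => by simpa using (hadj u).1 hu
      _ ≤ 3 := by have := Finset.card_le_two (a := p) (b := q); omega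
      _ ≤ chi G := hbad.three_le_chi hap

theorem MinimallyBad.greedy_ne_of_idx_eq_zero (hmin : MinimallyBad G)
    (hbad : BadOrder G l) {a s b v : V} (hadj : ∀ w, G.Adj a w ↔ w = s ∨ w = b)
    (ha0 : idx l a = 0) (hsv : G.Adj s v) (hva : v ≠ a) (hvs : idx l v < idx l s) :
    greedy G l v ≠ greedy G l a := by
  intro hcol
  obtain ⟨hnd, hcov, hconn⟩ := isConnOrder_iff.1 hbad.1
  have hv0 : idx l v ≠ 0 := fun h => hva (idx_inj (hcov v) (h.trans ha0.symm))
  have hlen : 3 ≤ l.length := by have := idx_lt_length_iff.2 (hcov s); omega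
  obtain ⟨x, b', c, t, rfl⟩ : ∃ x b' c t, l = x :: b' :: c :: t := by
    rcases l with _ | ⟨x, _ | ⟨b', _ | ⟨c, t⟩⟩⟩ <;> simp at hlen ⊢
  obtain rfl : a = x := by by_contra h; simp [idx_cons_cons_cons, h] at ha0; split_ifs at ha0
  have hnd' := hnd
  simp only [List.nodup_cons, List.mem_cons, not_or] at hnd'
  have hlt2 : ∀ w, idx (a :: b' :: c :: t) w < 2 → w = a ∨ w = b' := fun w h => by
    simp only [idx_cons_cons_cons] at h; split_ifs at h <;> simp_all
  have hb'1 : idx (a :: b' :: c :: t) b' = 1 := by simp [idx_cons_cons_cons, Ne.symm hnd'.1.1]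
  have hc2 : idx (a :: b' :: c :: t) c = 2 := by
    simp [idx_cons_cons_cons, Ne.symm hnd'.1.2.1, Ne.symm hnd'.2.1.1]
  -- the order starts `a, b, c` with `c` adjacent to `b` but not to `a`
  have hab' : G.Adj a b' := by
    obtain ⟨u, hu, hlt⟩ := hconn b' (hcov b') (by omega)
    rcases hlt2 u (by omega) with rfl | rfl
    · exact hu
    · omega
  have hs2 : 2 ≤ idx (a :: b' :: c :: t) s := by omega
  have hb'b : b' = b := ((hadj b').1 hab').resolve_left (by rintro rfl; omega)
  have hcs : c ≠ s := by
    rintro rfl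
    rcases hlt2 v (by omega) with rfl | rfl
    · exact hva rfl
    · exact greedy_ne_of_adj hnd (hcov _) (hcov _) hab' hcol.symm
  have hac : ¬ G.Adj a c := fun h =>
    ((hadj c).1 h).elim hcs fun hcb => hnd'.2.1.1 (hb'b.trans hcb.symm)
  have hb'c : G.Adj b' c := by
    obtain ⟨u, hu, hlt⟩ := hconn c (hcov c) (by omega)
    rcases hlt2 u (by omega) with rfl | rfl
    · exact absurd hu hac
    · exact hu
  refine hmin.false_of_delete_head hbad hab' hac hb'c fun u hu hub' => ?_
  obtain rfl : u = s := ((hadj u).1 hu).resolve_right (hb'b ▸ hub')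
  exact ⟨v, hva, hsv.symm, hvs, hcol⟩

theorem MinimallyBad.greedy_ne_of_adj_of_idx_lt (hmin : MinimallyBad G) (hbad : BadOrder G l)
    {a s v : V} (hdeg : (G.neighborSet a).ncard = 2) (has : G.Adj a s)
    (has_lt : idx l a < idx l s) (hsv : G.Adj s v) (hva : v ≠ a) (hvs : idx l v < idx l s) :
    greedy G l v ≠ greedy G l a := by
  intro hcol
  obtain ⟨hnd, hcov, hconn⟩ := isConnOrder_iff.1 hbad.1
  obtain ⟨b, -, hadj⟩ := exists_adj_iff_of_ncard_neighborSet_eq_two hdeg has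
  by_cases ha0 : idx l a = 0
  · exact hmin.greedy_ne_of_idx_eq_zero hbad hadj ha0 hsv hva hvs hcol
  -- `a` has an earlier neighbour, which can only be `b`; its one later neighbour `s` is
  -- compensated by `v`
  obtain ⟨u, hu, hlt⟩ := hconn a (hcov a) ha0
  have hba : idx l b < idx l a := by
    rcases (hadj u).1 hu.symm with rfl | rfl <;> omega
  refine hmin.false_of_erase hbad ha0 (fun w hw hlt => ?_) ?_
  · rcases (hadj w).1 hw with rfl | rfl
    · exact ⟨v, hva, hsv.symm, hvs, hcol⟩
    · omega
  · exact (hmin.greedy_le_two_of_ncard_neighborSet_eq_two hbad hdeg).trans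
      (two_le_chi_of_adj has)

theorem MinimallyBad.greedy_eq_of_forall_adj_greedy_ne (hmin : MinimallyBad G)
    (hbad : BadOrder G l) {a s : V} {c : ℕ} (hdeg : (G.neighborSet a).ncard = 2)
    (has : G.Adj a s) (hc : c = 1 ∨ c = 2) (hs : greedy G l s ≠ c)
    (hnbr : ∀ u, G.Adj s u → u ≠ a → idx l u < idx l s → greedy G l u ≠ c) :
    greedy G l a = c := by
  obtain ⟨hnd, hcov, -⟩ := isConnOrder_iff.1 hbad.1
  have hs1 := one_le_greedy hnd (hcov s) (G := G)
  -- if `s` got a colour above `c`, the earlier neighbour of `s` with colour `c` must be `a`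
  have hbelow : c < greedy G l s → greedy G l a = c := fun hlt => by
    obtain ⟨w, hw, hwlt, hwc⟩ := exists_earlier_neighbor_greedy_eq hnd (hcov s) (by omega) hlt
    by_cases hwa : w = a
    · rwa [← hwa]
    · exact absurd hwc (hnbr w hw hwa hwlt)
  rcases hc with rfl | rfl
  · exact hbelow (by omega)
  by_cases h2 : 2 < greedy G l s
  · exact hbelow h2
  have := greedy_ne_of_adj hnd (hcov a) (hcov s) has
  have := hmin.greedy_le_two_of_ncard_neighborSet_eq_two hbad hdeg
  have := one_le_greedy hnd (hcov a) (G := G)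
  omega

end MinimallyBad

theorem stmt14 {V : Type*} [Fintype V] (G : SimpleGraph V) (l : List V)
    (hmin : MinimallyBad G) (hbad : BadOrder G l)
    (k : ℕ) (hk : 2 ≤ k) (s a : Fin k → V)
    (hsmono : ∀ i j : Fin k, i < j → idx l (s i) < idx l (s j))
    (hscomp : ∀ i : Fin k, i.1 < k - 1 → G.Adj (s i) (s ⟨k - 1, by omega⟩))
    (haS : ∀ i j : Fin k, a i ≠ s j)
    (hadeg : ∀ i : Fin k, (G.neighborSet (a i)).ncard = 2)
    (haN : ∀ i j : Fin k, G.Adj (a i) (s j) ↔ j = i)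
    (hNsub : ∀ i : Fin k, i.1 < k - 1 → ∀ u : V, G.Adj (s i) u →
      u ≠ a i → u ≠ s ⟨k - 1, by omega⟩ → G.Adj (s ⟨k - 1, by omega⟩) u)
    (hak : idx l (a ⟨k - 1, by omega⟩) < idx l (s ⟨k - 1, by omega⟩)) :
    (∀ v : V, G.Adj (s ⟨k - 1, by omega⟩) v → v ≠ a ⟨k - 1, by omega⟩ →
      idx l v < idx l (s ⟨k - 1, by omega⟩) →
      greedy G l v ≠ greedy G l (a ⟨k - 1, by omega⟩)) ∧
    ((∀ i : Fin k, greedy G l (a i) = 1) ∨ (∀ i : Fin k, greedy G l (a i) = 2)) ∧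
    (∀ i j : Fin k, i ≠ j → ¬ G.Adj (a i) (a j)) := by
  set K : Fin k := ⟨k - 1, by omega⟩
  obtain ⟨hnd, hcov, -⟩ := isConnOrder_iff.1 hbad.1
  have h1 : ∀ v, G.Adj (s K) v → v ≠ a K → idx l v < idx l (s K) →
      greedy G l v ≠ greedy G l (a K) := fun v hv hva hvs =>
    hmin.greedy_ne_of_adj_of_idx_lt hbad (hadeg K) ((haN K K).2 rfl) hak hv hva hvs
  have hK12 : greedy G l (a K) = 1 ∨ greedy G l (a K) = 2 := by
    have := hmin.greedy_le_two_of_ncard_neighborSet_eq_two hbad (hadeg K)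
    have := one_le_greedy hnd (hcov (a K)) (G := G)
    omega
  have h2 : ∀ i, greedy G l (a i) = greedy G l (a K) := by
    intro i
    by_cases hiK : i = K
    · rw [hiK]
    have hik : i.1 < k - 1 := by
      have : i.1 ≠ k - 1 := Fin.val_ne_of_ne hiK
      omega
    have hsi : idx l (s i) < idx l (s K) := hsmono i K (Fin.lt_def.2 hik)
    refine hmin.greedy_eq_of_forall_adj_greedy_ne hbad (hadeg i) ((haN i i).2 rfl) hK12
      (h1 _ (hscomp i hik).symm (haS K i).symm hsi) fun u hu hua hus => ?_
    refine h1 u (hNsub i hik u hu hua (by rintro rfl; omega)) ?_ (hus.trans hsi)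
    rintro rfl
    exact hiK ((haN K i).1 hu.symm)
  refine ⟨h1, hK12.imp (fun h i => (h2 i).trans h) (fun h i => (h2 i).trans h), ?_⟩
  intro i j _ hadj
  exact greedy_ne_of_adj hnd (hcov _) (hcov _) hadj ((h2 i).trans (h2 j).symm)
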